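/- Let Λ̃=(Δ̃,Θ̃) be a normalized binary directive bi-sequence of the form Δ̃=ν̃(a ā)^ω and Θ̃=σ̃(ϑ̄ ϑ)^ω, where ν̃ is a finite word over {0,1}, σ̃ a finite sequence of antimorphisms from {E,R} whose last element is ϑ, |ν̃|=|σ̃|=n₀, a∈{0,1}, ϑ∈{E,R}, ā is the letter distinct from a and ϑ̄ the antimorphism distinct from ϑ. Let x denote the unique finite word with w_{n₀}x=w_{n₀+1}, and let (ϑϑ̄)(x) denote the image of x under the composition ϑ∘ϑ̄. Then for every n>n₀ there exists k∈ℕ such that either w_n=w_{n₀}(x·(ϑϑ̄)(x))^k or w_n=w_{n₀}(x·(ϑϑ̄)(x))^k·x. Consequently, u(Λ̃) is purely periodic with period q, where q is the finite word determined by q·w_{n₀}=w_{n₀+1}·(ϑϑ̄)(x). -/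

import Mathlib

/-!
Generalized pseudostandard words (de Luca–De Luca) over binary and ternary
alphabets: antimorphisms, pseudopalindromic closure, directive bi-sequences.
-/

namespace GPS

variable {A : Type*} [Inhabited A]

/-- The involutory antimorphism on finite words induced by the letter map `f`:
reverse the word and apply `f` letterwise. -/
def anti (f : A → A) (w : List A) : List A := (w.map f).reverse

/-- `w` is an `f`-palindrome (a `ϑ`-palindrome for the antimorphism induced by `f`). -/
def IsPal (f : A → A) (w : List A) : Prop := anti f w = w

/-- The `f`-palindromic closure of `w`: a shortest `f`-palindrome having `w` as a
prefix (returns `w` itself in the degenerate case where none exists). -/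
noncomputable def closure (f : A → A) (w : List A) : List A := by
  classical
  exact if h : ∃ n : ℕ, ∃ p : List A, p.length = n ∧ w <+: p ∧ IsPal f p then
    Classical.choose (Nat.find_spec h)
  else w

/-- The sequence of pseudopalindromic prefixes `w_n` of the generalized
pseudostandard word `u(Δ, Θ)`; `prefixes Δ Θ n` is the paper's `w_n`, with
`Δ n = δ_{n+1}` and `Θ n = ϑ_{n+1}` (0-based indexing of the bi-sequence). -/
noncomputable def prefixes (Δ : ℕ → A) (Θ : ℕ → A → A) : ℕ → List A
  | 0 => []
  | n + 1 => closure (Θ n) (prefixes Δ Θ n ++ [Δ n])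

/-- The generalized pseudostandard word `u(Δ, Θ)` as an infinite word `ℕ → A`. -/
noncomputable def word (Δ : ℕ → A) (Θ : ℕ → A → A) (k : ℕ) : A :=
  (prefixes Δ Θ (k + 1)).getD k default

/-- `p` is a (finite) prefix of the infinite word `x`. -/
def IsPref (p : List A) (x : ℕ → A) : Prop := ∀ i < p.length, p.getD i default = x i

/-- `w` is a factor of the infinite word `x`. -/
def IsFactor (w : List A) (x : ℕ → A) : Prop :=
  ∃ i : ℕ, ∀ j < w.length, w.getD j default = x (i + j)

/-- `w` is a left special factor of the infinite word `x`. -/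
def LeftSpecial (w : List A) (x : ℕ → A) : Prop :=
  ∃ a b : A, a ≠ b ∧ IsFactor (a :: w) x ∧ IsFactor (b :: w) x

/-- The infinite word `x` is (eventually) periodic, i.e. of the form `z v^ω`
with `v` nonempty. -/
def Periodic (x : ℕ → A) : Prop :=
  ∃ p : ℕ, 0 < p ∧ ∃ N : ℕ, ∀ n, N ≤ n → x (n + p) = x n

/-- The infinite word `x` is purely periodic with period `q`, i.e. `x = q^ω`. -/
def PurePeriod (q : List A) (x : ℕ → A) : Prop :=
  q ≠ [] ∧ ∀ i : ℕ, x i = q.getD (i % q.length) default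

/-- Concatenation of `k` copies of the finite word `l`, i.e. `l^k`. -/
def wpow (l : List A) (k : ℕ) : List A := (List.replicate k l).flatten

/-! ### The binary alphabet `{0,1}` -/

/-- Letter map of the reversal antimorphism `R` over `{0,1}`. -/
def Rb : Fin 2 → Fin 2 := id

/-- Letter map of the exchange antimorphism `E` over `{0,1}` (`0 ↔ 1`). -/
def Eb : Fin 2 → Fin 2 := fun x => x + 1

/-- A binary directive bi-sequence is normalized if the sequence `(w_n)` contains
every prefix of `u(Δ,Θ)` that is an `R`-palindrome or an `E`-palindrome. -/
def NormalizedB (Δ : ℕ → Fin 2) (Θ : ℕ → Fin 2 → Fin 2) : Prop :=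
  ∀ p : List (Fin 2), IsPref p (word Δ Θ) → (IsPal Rb p ∨ IsPal Eb p) →
    ∃ n : ℕ, prefixes Δ Θ n = p

/-! ### The ternary alphabet `{0,1,2}` -/

/-- Letter map of the reversal antimorphism `R` over `{0,1,2}`. -/
def Rt : Fin 3 → Fin 3 := id

/-- Letter map of the exchange antimorphism `E_i` over `{0,1,2}`: it fixes `i`
and exchanges the other two letters (indeed `-(i+x) = i` iff `x = i` in `Fin 3`). -/
def Et (i : Fin 3) : Fin 3 → Fin 3 := fun x => -(i + x)

/-- A ternary directive bi-sequence is normalized if the sequence `(w_n)` contains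
every prefix of `u(Δ,Θ)` that is a `ϑ`-palindrome for some involutory antimorphism `ϑ`. -/
def NormalizedT (Δ : ℕ → Fin 3) (Θ : ℕ → Fin 3 → Fin 3) : Prop :=
  ∀ p : List (Fin 3), IsPref p (word Δ Θ) → (IsPal Rt p ∨ ∃ i : Fin 3, IsPal (Et i) p) →
    ∃ n : ℕ, prefixes Δ Θ n = p

end GPS
namespace GPS

/-!
The words `w_{n₀} (x y)^k` and `w_{n₀} (x y)^k x`, where `y = (ϑϑ̄)(x)`, are alternately
`ϑ`- and `ϑ̄`-palindromes: this follows algebraically from `w_{n₀}` being a `ϑ`-palindrome and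
`w_{n₀} x` a `ϑ̄`-palindrome, since the letter maps of `ϑ` and `ϑ̄` are commuting involutions.
They are the successive palindromic closures because normalization forbids long palindromic
suffixes: a `ϑ_{n+2}`-palindromic suffix `c m b` of `w_{n+1} b` makes `ϑ_{n+1}(m)` a palindromic
prefix of `w_{n+1}`, hence some `w_j` with `j ≤ n`. Finally `q w_{n₀} = w_{n₀} x y` gives
`q^k w_{n₀} = w_{n₀} (x y)^k`, so every `q^k` is a prefix of `u`.
-/

variable {A : Type*}

section Antimorphism

variable {f g : A → A} {w : List A}

theorem anti_append (f : A → A) (u v : List A) : anti f (u ++ v) = anti f v ++ anti f u := by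
  simp [anti]

@[simp] theorem length_anti (f : A → A) (w : List A) : (anti f w).length = w.length := by
  simp [anti]

theorem anti_anti (f g : A → A) (w : List A) : anti f (anti g w) = w.map (f ∘ g) := by
  simp [anti, List.map_reverse]

theorem anti_map (f g : A → A) (w : List A) : anti f (w.map g) = anti (f ∘ g) w := by
  simp [anti]

theorem anti_injective (hf : Function.Injective f) : Function.Injective (anti f) :=
  List.reverse_injective.comp (List.map_injective_iff.2 hf)

theorem isPal_append_anti (hf : Function.Involutive f) (w : List A) :
    IsPal f (w ++ anti f w) := by
  rw [IsPal, anti_append, anti_anti, hf.comp_self, List.map_id]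

theorem IsPal.of_append_append {p s d : List A} (h : IsPal f (p ++ s ++ d))
    (hpd : p.length = d.length) : anti f d = p ∧ IsPal f s := by
  rw [IsPal, anti_append, anti_append, List.append_assoc] at h
  obtain ⟨hd, h'⟩ := List.append_inj h (by simp [hpd])
  exact ⟨hd, (List.append_inj h' (by simp)).1⟩

theorem IsPal.anti_prefix_of_suffix {W t : List A} (hW : IsPal f W) (ht : t <:+ W) :
    anti f t <+: W := by
  obtain ⟨r, rfl⟩ := ht
  conv_rhs => rw [← hW]
  rw [anti_append]
  exact List.prefix_append _ _

theorem IsPal.anti_of_commute (hw : IsPal g w) (hfg : Function.Commute f g) :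
    IsPal g (anti f w) := by
  rw [IsPal, anti_anti, ← hfg.comp_eq, ← anti_anti, hw]

theorem IsPal.append_map_comp (hf : Function.Involutive f) (hfg : Function.Commute f g)
    {u x : List A} (hu : IsPal f u) (hux : IsPal g (u ++ x)) :
    IsPal f (u ++ x ++ x.map (f ∘ g)) := by
  have hgu : anti g u = u.map (f ∘ g) := by
    conv_lhs => rw [← hu]
    rw [anti_anti, hfg.comp_eq]
  calc anti f (u ++ x ++ x.map (f ∘ g))
      = anti g x ++ anti f (anti g (u ++ x)) := by
        rw [anti_append, anti_map, ← Function.comp_assoc, hf.comp_self, Function.id_comp, hux]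
    _ = anti g (u ++ x) ++ x.map (f ∘ g) := by
        rw [anti_anti, List.map_append, anti_append, hgu, List.append_assoc]
    _ = u ++ x ++ x.map (f ∘ g) := by rw [hux]

theorem exists_isPal_prefix_of_isPal_suffix_concat (hfg : Function.Commute f g)
    {W s : List A} {b : A} (hW : IsPal f W) (hs : s <:+ W ++ [b]) (hspal : IsPal g s)
    (hlen : 2 ≤ s.length) : ∃ m, m <+: W ∧ IsPal g m ∧ m.length + 2 = s.length := by
  obtain rfl | ⟨t, rfl, ht⟩ := List.suffix_concat_iff.1 hs
  · simp at hlen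
  obtain ⟨c, m, rfl⟩ : ∃ c m, t = c :: m :=
    List.exists_cons_of_ne_nil (by rintro rfl; simp at hlen)
  have hm : IsPal g m := (hspal.of_append_append (p := [c]) rfl).2
  refine ⟨anti f m, ?_, hm.anti_of_commute hfg, by simp⟩
  have hcm : anti f (c :: m) = anti f m ++ [f c] := anti_append f [c] m
  exact (List.prefix_append _ _).trans (hcm ▸ hW.anti_prefix_of_suffix ht)

end Antimorphism

section Power

theorem wpow_succ (l : List A) (k : ℕ) : wpow l (k + 1) = l ++ wpow l k := by
  simp [wpow, List.replicate_succ]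

theorem wpow_succ' (l : List A) (k : ℕ) : wpow l (k + 1) = wpow l k ++ l := by
  simp [wpow, List.replicate_succ']

@[simp] theorem length_wpow (l : List A) (k : ℕ) : (wpow l k).length = k * l.length := by
  simp [wpow, List.sum_replicate]

theorem wpow_append_eq_append_wpow {q P z : List A} (h : q ++ P = P ++ z) (k : ℕ) :
    wpow q k ++ P = P ++ wpow z k := by
  induction k with
  | zero => simp [wpow]
  | succ k ih => rw [wpow_succ', wpow_succ', List.append_assoc, h, ← List.append_assoc, ih,
      List.append_assoc]

theorem getD_wpow (q : List A) {k i : ℕ} (hi : i < k * q.length) (d : A) :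
    (wpow q k).getD i d = q.getD (i % q.length) d := by
  induction k generalizing i with
  | zero => simp at hi
  | succ k ih =>
    rw [wpow_succ]
    rcases lt_or_ge i q.length with h | h
    · rw [List.getD_append _ _ _ _ h, Nat.mod_eq_of_lt h]
    · rw [List.getD_append_right _ _ _ _ h, ih (by rw [Nat.succ_mul] at hi; omega),
        ← Nat.mod_eq_sub_mod h]

theorem isPal_append_wpow {f g : A → A} (hf : Function.Involutive f) (hg : Function.Involutive g)
    (hfg : Function.Commute f g) {u x : List A} (hu : IsPal f u) (hux : IsPal g (u ++ x))
    (k : ℕ) : IsPal f (u ++ wpow (x ++ x.map (f ∘ g)) k) ∧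
      IsPal g (u ++ wpow (x ++ x.map (f ∘ g)) k ++ x) := by
  induction k with
  | zero => simpa [wpow] using ⟨hu, hux⟩
  | succ k ih =>
    have hpow : u ++ wpow (x ++ x.map (f ∘ g)) (k + 1) =
        u ++ wpow (x ++ x.map (f ∘ g)) k ++ x ++ x.map (f ∘ g) := by
      simp [wpow_succ']
    have hback : (x.map (f ∘ g)).map (g ∘ f) = x := by
      rw [List.map_map]
      conv_rhs => rw [← List.map_id x]
      exact List.map_congr_left fun c _ => by simp only [Function.comp_apply, hf (g c), hg c, id]
    have hnext := ih.1.append_map_comp hf hfg ih.2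
    refine ⟨hpow ▸ hnext, ?_⟩
    rw [hpow]
    simpa only [hback] using ih.2.append_map_comp hg hfg.symm hnext

end Power

section PurePeriod

theorem _root_.List.IsPrefix.getD_eq {u v : List A} (h : u <+: v) {i : ℕ}
    (hi : i < u.length) (d : A) : u.getD i d = v.getD i d := by
  rw [List.getD_eq_getElem _ _ hi, List.getD_eq_getElem _ _ (hi.trans_le h.length_le),
    h.getElem hi]

theorem IsPref.mono [Inhabited A] {p p' : List A} {u : ℕ → A} (hp : IsPref p' u) (h : p <+: p') :
    IsPref p u := fun i hi => by
  rw [h.getD_eq hi]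
  exact hp i (hi.trans_le h.length_le)

theorem purePeriod_of_isPref_wpow [Inhabited A] {q : List A} {u : ℕ → A} (hq : q ≠ [])
    (h : ∀ k, IsPref (wpow q k) u) : PurePeriod q u := by
  refine ⟨hq, fun i => ?_⟩
  have hi : i < (i + 1) * q.length :=
    lt_of_lt_of_le (Nat.lt_succ_self i) (Nat.le_mul_of_pos_right _ (List.length_pos_iff.2 hq))
  rw [← h (i + 1) i (by simpa using hi), getD_wpow q hi]

theorem purePeriod_of_append_eq_append [Inhabited A] {q P z : List A} {u : ℕ → A}
    (h : q ++ P = P ++ z) (hz : z ≠ []) (hu : ∀ k, IsPref (P ++ wpow z k) u) :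
    PurePeriod q u := by
  refine purePeriod_of_isPref_wpow (by rintro rfl; simp_all) fun k => (hu k).mono ?_
  rw [← wpow_append_eq_append_wpow h]
  exact List.prefix_append _ _

end PurePeriod

section Closure

variable {f : A → A} {w T : List A}

theorem prefix_closure (f : A → A) (w : List A) : w <+: closure f w := by
  classical
  rw [closure]
  split
  · next h => exact (Classical.choose_spec (Nat.find_spec h)).2.1
  · exact List.prefix_refl w

theorem isPal_closure_and_length_le (hT : w <+: T) (hTpal : IsPal f T) :
    IsPal f (closure f w) ∧ (closure f w).length ≤ T.length := by
  classical
  have h : ∃ n, ∃ p : List A, p.length = n ∧ w <+: p ∧ IsPal f p := ⟨_, T, rfl, hT, hTpal⟩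
  rw [closure, dif_pos h]
  obtain ⟨hlen, -, hpal⟩ := Classical.choose_spec (Nat.find_spec h)
  refine ⟨hpal, ?_⟩
  rw [hlen]
  exact Nat.find_le ⟨T, rfl, hT, hTpal⟩

theorem isPal_closure (hf : Function.Involutive f) (w : List A) : IsPal f (closure f w) :=
  (isPal_closure_and_length_le (List.prefix_append w _) (isPal_append_anti hf w)).1

/-- An `f`-palindromic suffix `s` of `w` yields an `f`-palindromic extension of `w` of length
`2 |w| - |s|`; `hsuf` says that none of these is shorter than `T`. -/
theorem closure_eq_of_isPal (hf : Function.Involutive f) (hT : w <+: T) (hTpal : IsPal f T)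
    (hsuf : ∀ s, s <:+ w → IsPal f s → s.length + T.length ≤ 2 * w.length) :
    closure f w = T := by
  obtain ⟨hcpal, hcle⟩ := isPal_closure_and_length_le hT hTpal
  obtain ⟨d, hd⟩ := prefix_closure f w
  obtain ⟨d', rfl⟩ := hT
  rw [← hd] at hcpal hcle ⊢
  have split : ∀ e, IsPal f (w ++ e) → e.length ≤ w.length →
      anti f e = w.take e.length ∧ IsPal f (w.drop e.length) := fun e he hle => by
    rw [← List.take_append_drop e.length w] at he
    exact he.of_append_append (by simp [hle])
  have hd'w : d'.length ≤ w.length := by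
    have := hsuf [] List.nil_suffix rfl
    simp only [List.length_nil, List.length_append] at this
    omega
  simp only [List.length_append] at hcle
  obtain ⟨hanti, hs⟩ := split d hcpal (by omega)
  have hlen : d.length = d'.length := by
    have := hsuf _ (List.drop_suffix _ _) hs
    simp only [List.length_drop, List.length_append] at this
    omega
  obtain ⟨hanti', -⟩ := split d' hTpal hd'w
  rw [anti_injective hf.injective (hanti.trans (hlen ▸ hanti'.symm))]

end Closure

section Prefixes

variable (Δ : ℕ → A) (Θ : ℕ → A → A)

theorem append_prefix_prefixes_succ (n : ℕ) :
    prefixes Δ Θ n ++ [Δ n] <+: prefixes Δ Θ (n + 1) :=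
  prefix_closure _ _

theorem singleton_prefix_of_append_eq_prefixes_succ {n : ℕ} {x : List A}
    (hx : prefixes Δ Θ n ++ x = prefixes Δ Θ (n + 1)) : [Δ n] <+: x := by
  have h := append_prefix_prefixes_succ Δ Θ n
  rwa [← hx, List.prefix_append_right_inj] at h

theorem prefixes_prefix_of_le {i j : ℕ} (hij : i ≤ j) : prefixes Δ Θ i <+: prefixes Δ Θ j := by
  induction hij with
  | refl => exact List.prefix_refl _
  | step _ ih => exact ih.trans ((List.prefix_append _ _).trans (append_prefix_prefixes_succ Δ Θ _))

theorem strictMono_length_prefixes : StrictMono fun n => (prefixes Δ Θ n).length :=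
  strictMono_nat_of_lt_succ fun n => by
    simpa using (append_prefix_prefixes_succ Δ Θ n).length_le

theorem isPref_prefixes [Inhabited A] (n : ℕ) : IsPref (prefixes Δ Θ n) (word Δ Θ) := by
  intro i hi
  have hi' : i < (prefixes Δ Θ (i + 1)).length :=
    Nat.lt_of_succ_le ((strictMono_length_prefixes Δ Θ).id_le (i + 1))
  rw [word]
  rcases le_total n (i + 1) with h | h
  · exact (prefixes_prefix_of_le Δ Θ h).getD_eq hi _
  · exact ((prefixes_prefix_of_le Δ Θ h).getD_eq hi' _).symm

end Prefixes

section Binary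

theorem involutive_of_eq_Rb_or_Eb {f : Fin 2 → Fin 2} (hf : f = Rb ∨ f = Eb) :
    Function.Involutive f := by
  rcases hf with rfl | rfl <;> intro c <;> fin_cases c <;> rfl

theorem commute_of_eq_Rb_or_Eb {f g : Fin 2 → Fin 2} (hf : f = Rb ∨ f = Eb)
    (hg : g = Rb ∨ g = Eb) : Function.Commute f g := by
  rcases hf with rfl | rfl <;> rcases hg with rfl | rfl <;> intro c <;> fin_cases c <;> rfl

variable {Δ : ℕ → Fin 2} {Θ : ℕ → Fin 2 → Fin 2}

theorem isPal_prefixes_succ (hΘ : ∀ n, Θ n = Rb ∨ Θ n = Eb) (n : ℕ) :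
    IsPal (Θ n) (prefixes Δ Θ (n + 1)) :=
  isPal_closure (involutive_of_eq_Rb_or_Eb (hΘ n)) _

theorem length_le_of_isPal_suffix (hΘ : ∀ n, Θ n = Rb ∨ Θ n = Eb) (hnorm : NormalizedB Δ Θ)
    (n : ℕ) {b : Fin 2} {s : List (Fin 2)} (hs : s <:+ prefixes Δ Θ (n + 1) ++ [b])
    (hspal : IsPal (Θ (n + 1)) s) : s.length ≤ (prefixes Δ Θ n).length + 2 := by
  rcases lt_or_ge s.length 2 with hlt | hge
  · omega
  obtain ⟨m, hmW, hmpal, hmlen⟩ := exists_isPal_prefix_of_isPal_suffix_concat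
    (commute_of_eq_Rb_or_Eb (hΘ n) (hΘ (n + 1)))
    (isPal_prefixes_succ hΘ n) hs hspal hge
  obtain ⟨j, rfl⟩ := hnorm m ((isPref_prefixes Δ Θ (n + 1)).mono hmW) <| by
    rcases hΘ (n + 1) with h | h <;> rw [h] at hmpal <;> simp [hmpal]
  have hj : j < n + 1 := (strictMono_length_prefixes Δ Θ).lt_iff_lt.1 <| by
    have := hs.length_le
    simp only [List.length_append, List.length_singleton] at this
    omega
  have := (strictMono_length_prefixes Δ Θ).monotone (Nat.lt_succ_iff.1 hj)
  omega

theorem prefixes_add_two_eq_append (hΘ : ∀ n, Θ n = Rb ∨ Θ n = Eb) (hnorm : NormalizedB Δ Θ)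
    (n : ℕ) {u v : List (Fin 2)} (hu : prefixes Δ Θ n ++ u = prefixes Δ Θ (n + 1))
    (hv : [Δ (n + 1)] <+: v) (hvu : v.length ≤ u.length)
    (hpal : IsPal (Θ (n + 1)) (prefixes Δ Θ (n + 1) ++ v)) :
    prefixes Δ Θ (n + 2) = prefixes Δ Θ (n + 1) ++ v := by
  refine closure_eq_of_isPal (involutive_of_eq_Rb_or_Eb (hΘ (n + 1)))
    ((List.prefix_append_right_inj _).2 hv) hpal fun s hs hspal => ?_
  have := length_le_of_isPal_suffix hΘ hnorm n hs hspal
  have := congrArg List.length hu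
  simp only [List.length_append, List.length_singleton] at *
  omega

theorem prefixes_eq_append_wpow (hΘ : ∀ n, Θ n = Rb ∨ Θ n = Eb) (hnorm : NormalizedB Δ Θ)
    {a : Fin 2} {ϑ ϑ' : Fin 2 → Fin 2} {m₀ : ℕ} (hlast : Θ m₀ = ϑ)
    (hpat : ∀ l : ℕ, Δ (m₀ + 1 + 2*l) = a ∧ Δ (m₀ + 2 + 2*l) = Eb a ∧
      Θ (m₀ + 1 + 2*l) = ϑ' ∧ Θ (m₀ + 2 + 2*l) = ϑ)
    (hE : ϑ (ϑ' a) = Eb a) {x : List (Fin 2)}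
    (hx : prefixes Δ Θ (m₀ + 1) ++ x = prefixes Δ Θ (m₀ + 2)) (k : ℕ) :
    prefixes Δ Θ (m₀ + 1 + 2 * k) = prefixes Δ Θ (m₀ + 1) ++ wpow (x ++ x.map (ϑ ∘ ϑ')) k ∧
      prefixes Δ Θ (m₀ + 1 + 2 * k + 1) =
        prefixes Δ Θ (m₀ + 1) ++ wpow (x ++ x.map (ϑ ∘ ϑ')) k ++ x := by
  have hpat' : ∀ k, Δ (m₀ + 1 + 2 * k + 1) = Eb a ∧ Θ (m₀ + 1 + 2 * k + 1) = ϑ ∧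
      Δ (m₀ + 1 + 2 * k + 2) = a ∧ Θ (m₀ + 1 + 2 * k + 2) = ϑ' := fun k => by
    have h₁ := hpat k
    have h₂ := hpat (k + 1)
    rw [show m₀ + 2 + 2 * k = m₀ + 1 + 2 * k + 1 by ring] at h₁
    rw [show m₀ + 1 + 2 * (k + 1) = m₀ + 1 + 2 * k + 2 by ring] at h₂
    exact ⟨h₁.2.1, h₁.2.2.2, h₂.1, h₂.2.2.1⟩
  have hΘ' : Θ (m₀ + 1) = ϑ' := by simpa using (hpat 0).2.2.1
  have hxa : [a] <+: x := by
    have h := singleton_prefix_of_append_eq_prefixes_succ Δ Θ hx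
    rwa [show Δ (m₀ + 1) = a by simpa using (hpat 0).1] at h
  have hya : [Eb a] <+: x.map (ϑ ∘ ϑ') := by
    obtain ⟨x', rfl⟩ := hxa
    simp [hE]
  have hpal := isPal_append_wpow (hlast ▸ involutive_of_eq_Rb_or_Eb (hΘ m₀))
    (hΘ' ▸ involutive_of_eq_Rb_or_Eb (hΘ (m₀ + 1)))
    (hlast ▸ hΘ' ▸ commute_of_eq_Rb_or_Eb (hΘ m₀) (hΘ (m₀ + 1)))
    (hlast ▸ isPal_prefixes_succ hΘ m₀) (hx ▸ hΘ' ▸ isPal_prefixes_succ hΘ (m₀ + 1))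
  set P := prefixes Δ Θ (m₀ + 1)
  set z := x ++ x.map (ϑ ∘ ϑ')
  have hpow : ∀ j, P ++ wpow z (j + 1) = P ++ wpow z j ++ x ++ x.map (ϑ ∘ ϑ') := fun j => by
    simp [z, wpow_succ']
  induction k with
  | zero => exact ⟨by simp [P, wpow], by simp [P, wpow, hx]⟩
  | succ k ih =>
    obtain ⟨hΔ₁, hΘ₁, hΔ₂, hΘ₂⟩ := hpat' k
    have h₁ : prefixes Δ Θ (m₀ + 1 + 2 * k + 2) = P ++ wpow z (k + 1) := by
      rw [hpow, ← ih.2]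
      refine prefixes_add_two_eq_append hΘ hnorm _ (by rw [ih.1, ih.2]) (hΔ₁ ▸ hya) (by simp) ?_
      rw [hΘ₁, ih.2, ← hpow]
      exact (hpal (k + 1)).1
    refine ⟨h₁, ?_⟩
    refine h₁ ▸ prefixes_add_two_eq_append hΘ hnorm (m₀ + 1 + 2 * k + 1)
      (by rw [ih.2, h₁, hpow]) (hΔ₂ ▸ hxa) (by simp) ?_
    rw [h₁, hΘ₂]
    exact (hpal (k + 1)).2

end Binary

/-- for a normalized binary bi-sequence of the form
`(ν̃(a ā)^ω, σ̃(ϑ̄ ϑ)^ω)` with `|ν̃| = |σ̃| = n₀ = m₀ + 1` and `σ̃` ending in `ϑ`,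
every `w_n` with `n > n₀` equals `w_{n₀}(x·(ϑϑ̄)(x))^k` or `w_{n₀}(x·(ϑϑ̄)(x))^k·x`,
where `w_{n₀} x = w_{n₀+1}`; consequently `u` is purely periodic with period `q`,
where `q·w_{n₀} = w_{n₀+1}·(ϑϑ̄)(x)`. -/
theorem periodic_shape_binary_alternating (Δ : ℕ → Fin 2) (Θ : ℕ → Fin 2 → Fin 2)
    (hΘ : ∀ n, Θ n = Rb ∨ Θ n = Eb)
    (hnorm : NormalizedB Δ Θ)
    (a : Fin 2) (ϑ ϑ' : Fin 2 → Fin 2)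
    (hϑ : (ϑ = Rb ∧ ϑ' = Eb) ∨ (ϑ = Eb ∧ ϑ' = Rb))
    (m₀ : ℕ) (hlast : Θ m₀ = ϑ)
    (hpat : ∀ l : ℕ, Δ (m₀ + 1 + 2*l) = a ∧ Δ (m₀ + 2 + 2*l) = Eb a ∧
      Θ (m₀ + 1 + 2*l) = ϑ' ∧ Θ (m₀ + 2 + 2*l) = ϑ)
    (x : List (Fin 2)) (hx : prefixes Δ Θ (m₀ + 1) ++ x = prefixes Δ Θ (m₀ + 2)) :
    (∀ n : ℕ, m₀ + 1 < n → ∃ k : ℕ,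
      prefixes Δ Θ n = prefixes Δ Θ (m₀ + 1) ++ wpow (x ++ anti ϑ (anti ϑ' x)) k ∨
      prefixes Δ Θ n = prefixes Δ Θ (m₀ + 1) ++ wpow (x ++ anti ϑ (anti ϑ' x)) k ++ x) ∧
    ∀ q : List (Fin 2),
      q ++ prefixes Δ Θ (m₀ + 1) = prefixes Δ Θ (m₀ + 2) ++ anti ϑ (anti ϑ' x) →
      PurePeriod q (word Δ Θ) := by
  have hE : ϑ (ϑ' a) = Eb a := by
    rcases hϑ with ⟨rfl, rfl⟩ | ⟨rfl, rfl⟩ <;> fin_cases a <;> rfl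
  have hshape := prefixes_eq_append_wpow hΘ hnorm hlast hpat hE hx
  have hx₀ : x ≠ [] :=
    (singleton_prefix_of_append_eq_prefixes_succ Δ Θ hx).ne_nil (List.cons_ne_nil _ _)
  rw [anti_anti]
  refine ⟨fun n hn => ?_, fun q hq => ?_⟩
  · obtain ⟨k, rfl | rfl⟩ : ∃ k, n = m₀ + 1 + 2 * k ∨ n = m₀ + 1 + 2 * k + 1 :=
      ⟨(n - m₀ - 1) / 2, by omega⟩
    exacts [⟨k, .inl (hshape k).1⟩, ⟨k, .inr (hshape k).2⟩]
  · refine purePeriod_of_append_eq_append (by rw [hq, ← hx, List.append_assoc])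
      (List.append_ne_nil_of_left_ne_nil hx₀ _) fun k => ?_
    rw [← (hshape k).1]
    exact isPref_prefixes Δ Θ _

end GPS
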